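/- arXiv:1110.6083 — 2 statements merged into one kernel-verified Lean document; each statement's English description precedes it below -/
import Mathlib

section
/- Let K be a finite extension of ℚ_p with uniformizer π and n > 1 a natural number. For each k > ord(n), setting k' = k + ord(n), the map x ↦ x^n is a bijection from K^{(k)} onto P_n^{(k')}, where for a set X ⊆ K, X^{(k)} = {x ∈ X | x ≠ 0 and ord(π^{−ord(x)} x − 1) ≥ k} and P_n = {x ∈ K^× | ∃ y ∈ K, y^n = x}. -/
open scoped BigOperators ENNReal NNReal

structure PadicLike (p : ℕ) [Fact p.Prime] (K : Type*) [Field K] [Algebra ℚ_[p] K] where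
  ord : K → ℤ
  pi : K
  q : ℕ
  pi_ne_zero : pi ≠ 0
  ord_pi : ord pi = 1
  one_lt_q : 1 < q
  ord_mul : ∀ x y : K, x ≠ 0 → y ≠ 0 → ord (x * y) = ord x + ord y
  ord_min_le_add : ∀ x y : K, x ≠ 0 → y ≠ 0 → x + y ≠ 0 → min (ord x) (ord y) ≤ ord (x + y)
  ord_compat : ∃ e : ℕ, 0 < e ∧ ∀ x : ℚ_[p], x ≠ 0 →
    ord (algebraMap ℚ_[p] K x) = (e : ℤ) * x.valuation

namespace PadicLike
variable {p : ℕ} [Fact p.Prime] {K : Type*} [Field K] [Algebra ℚ_[p] K]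

/-- The valuation ring `R = {x ∈ K | ord x ≥ 0}`. -/
def R (v : PadicLike p K) : Set K := {x | x = 0 ∨ 0 ≤ v.ord x}

/-- `X^{(k)} = {x ∈ X | x ≠ 0 and ord(π^{-ord x} x - 1) ≥ k}` (where `ord 0 = ∞` is
interpreted via the disjunct `π^{-ord x} x = 1`). -/
def lvl (v : PadicLike p K) (X : Set K) (k : ℤ) : Set K :=
  {x | x ∈ X ∧ x ≠ 0 ∧ (v.pi ^ (-v.ord x) * x = 1 ∨ k ≤ v.ord (v.pi ^ (-v.ord x) * x - 1))}

/-- `P_n`, the set of nonzero `n`-th powers in `K`. -/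
def Pset (n : ℕ) : Set K := {x : K | x ≠ 0 ∧ ∃ y : K, y ^ n = x}

end PadicLike

/-!
Writing `x = π ^ ord x * u` with `ord u = 0`, the map `x ↦ x ^ n` multiplies `ord` by `n` and
acts on unit parts by `u ↦ u ^ n`, so everything reduces to the principal units `U_k = 1 + π ^ k R`.
For `ord s ≥ 0` the binomial theorem gives `(1 + s) ^ n = 1 + n s + s ^ 2 c` with `c ∈ R`; when
`ord s > ord n` the linear term dominates, so `ord ((1 + s) ^ n - 1) = ord n + ord s`. This shows
that `u ↦ u ^ n` maps `U_k` injectively into `U_{k + ord n}`. Surjectivity is Newton's method for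
`X ^ n - w` started at `1`: since `k > ord n`, every step gains at least one digit of precision,
and the iterates converge because `K`, being finite-dimensional over `ℚ_p`, is complete for the
absolute value `p ^ (-ord / e)`.
-/

theorem eq_top_of_forall_add_natCast_le {a : WithTop ℤ} {c : ℤ}
    (h : ∀ m : ℕ, ((c + m : ℤ) : WithTop ℤ) ≤ a) : a = ⊤ := by
  induction a using WithTop.recTopCoe with
  | top => rfl
  | coe b =>
    have := WithTop.coe_le_coe.1 (h (b - c).toNat.succ)
    omega

namespace PadicLike

variable {p : ℕ} [Fact p.Prime] {K : Type*} [Field K] [Algebra ℚ_[p] K] (v : PadicLike p K)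

theorem ord_one : v.ord 1 = 0 := by
  simpa using (v.ord_mul 1 1 one_ne_zero one_ne_zero).symm

open Classical in
noncomputable def addVal : AddValuation K (WithTop ℤ) :=
  AddValuation.of (fun x => if x = 0 then ⊤ else (v.ord x : WithTop ℤ)) (if_pos rfl)
    (by simp [v.ord_one])
    (fun x y => by
      by_cases hx : x = 0
      · simp [hx]
      by_cases hy : y = 0
      · simp [hy]
      by_cases hxy : x + y = 0
      · simp [hxy]
      simpa [hx, hy, hxy] using v.ord_min_le_add x y hx hy hxy)
    (fun x y => by
      by_cases hx : x = 0
      · simp [hx]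
      by_cases hy : y = 0
      · simp [hy]
      simp [hx, hy, v.ord_mul x y hx hy])

theorem addVal_of_ne_zero {x : K} (hx : x ≠ 0) : v.addVal x = v.ord x := by
  simp [addVal, hx]

theorem ord_pow {x : K} (hx : x ≠ 0) (n : ℕ) : v.ord (x ^ n) = n * v.ord x := by
  have h := v.addVal.map_pow x n
  rwa [v.addVal_of_ne_zero hx, v.addVal_of_ne_zero (pow_ne_zero n hx), ← WithTop.coe_nsmul,
    WithTop.coe_inj, nsmul_eq_mul] at h

theorem ord_pi_zpow (m : ℤ) : v.ord (v.pi ^ m) = m := by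
  obtain ⟨m, rfl | rfl⟩ := Int.eq_nat_or_neg m
  · rw [zpow_natCast, v.ord_pow v.pi_ne_zero, v.ord_pi, mul_one]
  · have h := v.addVal.map_inv (x := v.pi ^ m)
    rw [← zpow_natCast, ← zpow_neg, v.addVal_of_ne_zero (zpow_ne_zero _ v.pi_ne_zero),
      zpow_natCast, v.addVal_of_ne_zero (pow_ne_zero _ v.pi_ne_zero), v.ord_pow v.pi_ne_zero,
      v.ord_pi, mul_one] at h
    exact_mod_cast h

theorem addVal_natCast_nonneg (m : ℕ) : 0 ≤ v.addVal (m : K) := by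
  rcases eq_or_ne (m : K) 0 with hm | hm
  · simp [hm]
  obtain ⟨e, -, he⟩ := v.ord_compat
  have hm' : (m : ℚ_[p]) ≠ 0 := by rintro h; simp_all
  rw [v.addVal_of_ne_zero hm, ← map_natCast (algebraMap ℚ_[p] K), he _ hm',
    Padic.valuation_natCast]
  exact_mod_cast by positivity

theorem coe_le_addVal_iff {k : ℤ} {x : K} :
    (k : WithTop ℤ) ≤ v.addVal x ↔ x = 0 ∨ k ≤ v.ord x := by
  rcases eq_or_ne x 0 with rfl | hx
  · simp
  · simp [v.addVal_of_ne_zero hx, hx]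

def unitPart (x : K) : K := v.pi ^ (-v.ord x) * x

def principalUnits (k : ℤ) : Set K := {u | (k : WithTop ℤ) ≤ v.addVal (u - 1)}

theorem mem_lvl_iff {X : Set K} {k : ℤ} {x : K} :
    x ∈ v.lvl X k ↔ x ∈ X ∧ x ≠ 0 ∧ v.unitPart x ∈ v.principalUnits k := by
  simp only [lvl, principalUnits, unitPart, Set.mem_ofPred_eq, coe_le_addVal_iff, sub_eq_zero]

theorem unitPart_pow {x : K} (hx : x ≠ 0) (n : ℕ) : v.unitPart (x ^ n) = v.unitPart x ^ n := by
  rw [unitPart, unitPart, v.ord_pow hx, mul_pow, ← zpow_natCast (v.pi ^ _), ← zpow_mul,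
    neg_mul, mul_comm (n : ℤ)]

theorem pi_zpow_ord_mul_unitPart (x : K) : v.pi ^ v.ord x * v.unitPart x = x := by
  rw [unitPart, ← mul_assoc, ← zpow_add₀ v.pi_ne_zero, add_neg_cancel, zpow_zero, one_mul]

theorem unitPart_pi_zpow_mul {u : K} (hu : v.addVal u = 0) (m : ℤ) :
    v.unitPart (v.pi ^ m * u) = u := by
  have hu0 : u ≠ 0 := by rintro rfl; simp at hu
  have hord : v.ord u = 0 := by exact_mod_cast (v.addVal_of_ne_zero hu0).symm.trans hu
  rw [unitPart, v.ord_mul _ _ (zpow_ne_zero _ v.pi_ne_zero) hu0, v.ord_pi_zpow, hord, add_zero,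
    ← mul_assoc, ← zpow_add₀ v.pi_ne_zero, neg_add_cancel, zpow_zero, one_mul]

theorem ord_eq_of_pow_eq {n : ℕ} (hn : n ≠ 0) {x y : K} (hx : x ≠ 0) (hy : y ≠ 0)
    (h : x ^ n = y ^ n) : v.ord x = v.ord y := by
  have := congrArg v.ord h
  rw [v.ord_pow hx, v.ord_pow hy] at this
  exact mul_left_cancel₀ (Nat.cast_ne_zero.2 hn) this

theorem addVal_eq_zero_of_mem_principalUnits {k : ℤ} (hk : 0 < k) {u : K}
    (hu : u ∈ v.principalUnits k) : v.addVal u = 0 := by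
  rw [← v.addVal.map_one]
  refine v.addVal.map_eq_of_lt_sub (lt_of_lt_of_le ?_ hu)
  rw [v.addVal.map_one]
  exact_mod_cast hk

theorem exists_one_add_pow_eq {s : K} (hs : 0 ≤ v.addVal s) (n : ℕ) :
    ∃ c, 0 ≤ v.addVal c ∧ (1 + s) ^ n = 1 + n * s + s ^ 2 * c := by
  induction n with
  | zero => exact ⟨0, by simp, by simp⟩
  | succ n ih =>
    obtain ⟨c, hc, hpow⟩ := ih
    have hs1 : 0 ≤ v.addVal (1 + s) := v.addVal.map_le_add v.addVal.map_one.ge hs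
    refine ⟨n + c * (1 + s), v.addVal.map_le_add (v.addVal_natCast_nonneg n) ?_, ?_⟩
    · rw [v.addVal.map_mul]
      exact add_nonneg hc hs1
    · rw [pow_succ, hpow]
      push_cast
      ring

theorem addVal_one_add_pow_sub_one {n : ℕ} {s : K} (hs : v.addVal (n : K) < v.addVal s) :
    v.addVal ((1 + s) ^ n - 1) = v.addVal (n : K) + v.addVal s := by
  rcases eq_or_ne s 0 with rfl | hs0
  · simp
  obtain ⟨c, hc, hpow⟩ := v.exists_one_add_pow_eq ((v.addVal_natCast_nonneg n).trans hs.le) n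
  rw [hpow, add_assoc, add_sub_cancel_left, v.addVal.map_add_eq_of_lt_left, v.addVal.map_mul]
  calc v.addVal ((n : K) * s) = v.addVal (n : K) + v.addVal s := v.addVal.map_mul _ _
    _ < v.addVal s + v.addVal s :=
        WithTop.add_lt_add_right (v.addVal.ne_top_iff.2 hs0) hs
    _ ≤ v.addVal (s ^ 2 * c) := by
        rw [v.addVal.map_mul, v.addVal.map_pow, two_nsmul]
        exact le_add_of_nonneg_right hc

theorem ord_natCast_nonneg {n : ℕ} (hn : (n : K) ≠ 0) : 0 ≤ v.ord (n : K) := by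
  exact_mod_cast (v.addVal_of_ne_zero hn).symm.trans_ge (v.addVal_natCast_nonneg n)

theorem addVal_natCast_lt {n : ℕ} {k : ℤ} (hn : (n : K) ≠ 0) (hk : v.ord (n : K) < k) {x : K}
    (hx : (k : WithTop ℤ) ≤ v.addVal x) : v.addVal (n : K) < v.addVal x :=
  lt_of_lt_of_le (by rw [v.addVal_of_ne_zero hn]; exact_mod_cast hk) hx

theorem pow_mapsTo_principalUnits {n : ℕ} {k : ℤ} (hn : (n : K) ≠ 0)
    (hk : v.ord (n : K) < k) :
    Set.MapsTo (· ^ n) (v.principalUnits k) (v.principalUnits (k + v.ord (n : K))) := by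
  intro u hu
  have h := v.addVal_one_add_pow_sub_one (v.addVal_natCast_lt hn hk hu)
  rw [add_sub_cancel] at h
  change ((k + v.ord (n : K) : ℤ) : WithTop ℤ) ≤ v.addVal (u ^ n - 1)
  rw [h, v.addVal_of_ne_zero hn, add_comm k, WithTop.coe_add]
  exact add_le_add_right hu _

theorem pow_injOn_principalUnits {n : ℕ} {k : ℤ} (hn : (n : K) ≠ 0) (hk : v.ord (n : K) < k) :
    Set.InjOn (· ^ n) (v.principalUnits k) := by
  intro a ha b hb (hab : a ^ n = b ^ n)
  have hb1 := v.addVal_eq_zero_of_mem_principalUnits ((v.ord_natCast_nonneg hn).trans_lt hk) hb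
  have hb0 : b ≠ 0 := by rintro rfl; simp at hb1
  have hs : (k : WithTop ℤ) ≤ v.addVal (a / b - 1) := by
    rw [show a / b - 1 = (a - 1 - (b - 1)) / b by field_simp; ring, v.addVal.map_div, hb1,
      sub_zero]
    exact v.addVal.map_le_sub ha hb
  have h := v.addVal_one_add_pow_sub_one (v.addVal_natCast_lt hn hk hs)
  rw [add_sub_cancel, div_pow, hab, div_self (pow_ne_zero n hb0), sub_self, v.addVal.map_zero,
    eq_comm, WithTop.add_eq_top, v.addVal.top_iff, v.addVal.top_iff, sub_eq_zero,
    div_eq_one_iff_eq hb0] at h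
  exact h.resolve_left hn

open Classical in
noncomputable def absVal (r : ℝ) (hr0 : 0 < r) (hr1 : r ≤ 1) : AbsoluteValue K ℝ where
  toFun x := if x = 0 then 0 else r ^ v.ord x
  map_mul' x y := by
    by_cases hx : x = 0
    · simp [hx]
    by_cases hy : y = 0
    · simp [hy]
    simp [hx, hy, v.ord_mul x y hx hy, zpow_add₀ hr0.ne']
  nonneg' x := by
    split_ifs
    · exact le_rfl
    · positivity
  eq_zero' x := by
    split_ifs with hx
    · simp [hx]
    · simp [hx, zpow_ne_zero _ hr0.ne']
  add_le' x y := by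
    by_cases hx : x = 0
    · simp [hx]
    by_cases hy : y = 0
    · simp [hy]
    by_cases hxy : x + y = 0
    · simp only [hxy, hx, hy, if_true, if_false]
      positivity
    simp only [hx, hy, hxy, if_false]
    have hmin := v.ord_min_le_add x y hx hy hxy
    rcases le_total (v.ord x) (v.ord y) with h | h
    · rw [min_eq_left h] at hmin
      exact (zpow_le_zpow_right_of_le_one₀ hr0 hr1 hmin).trans
        (le_add_of_nonneg_right (by positivity))
    · rw [min_eq_right h] at hmin
      exact (zpow_le_zpow_right_of_le_one₀ hr0 hr1 hmin).trans
        (le_add_of_nonneg_left (by positivity))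

theorem absVal_le_zpow_iff {r : ℝ} (hr0 : 0 < r) (hr1 : r < 1) {x : K} {c : ℤ} :
    v.absVal r hr0 hr1.le x ≤ r ^ c ↔ (c : WithTop ℤ) ≤ v.addVal x := by
  rcases eq_or_ne x 0 with rfl | hx
  · simp only [map_zero, v.addVal.map_zero, le_top, iff_true]
    positivity
  · simp only [absVal, AbsoluteValue.coe_mk, MulHom.coe_mk, hx, if_false,
      zpow_le_zpow_iff_right_of_lt_one₀ hr0 hr1, v.addVal_of_ne_zero hx, WithTop.coe_le_coe]

theorem exists_absVal_algebraMap : ∃ (r : ℝ) (hr0 : 0 < r) (hr1 : r < 1),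
    ∀ a : ℚ_[p], v.absVal r hr0 hr1.le (algebraMap ℚ_[p] K a) = ‖a‖ := by
  obtain ⟨e, he, hcompat⟩ := v.ord_compat
  have hp : (1 : ℝ) < p := by exact_mod_cast (Fact.out : p.Prime).one_lt
  have hpinv : (0 : ℝ) ≤ (p : ℝ)⁻¹ := by positivity
  refine ⟨(p : ℝ)⁻¹ ^ ((e : ℝ)⁻¹), by positivity,
    Real.rpow_lt_one hpinv (inv_lt_one_of_one_lt₀ hp) (by positivity), fun a => ?_⟩
  rcases eq_or_ne a 0 with rfl | ha
  · simp
  have ha' : algebraMap ℚ_[p] K a ≠ 0 := (map_ne_zero _).2 ha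
  simp only [absVal, AbsoluteValue.coe_mk, MulHom.coe_mk, ha', if_false, hcompat a ha,
    zpow_mul, zpow_natCast, Real.rpow_inv_natCast_pow hpinv he.ne',
    Padic.norm_eq_zpow_neg_valuation ha, zpow_neg, inv_zpow]

theorem le_addVal_sub_of_le_addVal_succ_sub {f : ℕ → K} {c : ℤ}
    (hf : ∀ m : ℕ, ((c + m : ℤ) : WithTop ℤ) ≤ v.addVal (f (m + 1) - f m)) {m j : ℕ}
    (hmj : m ≤ j) : ((c + m : ℤ) : WithTop ℤ) ≤ v.addVal (f j - f m) := by
  induction j, hmj using Nat.le_induction with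
  | base => simp
  | succ j hmj ih =>
    rw [← sub_add_sub_cancel]
    refine v.addVal.map_le_add ((WithTop.coe_le_coe.2 ?_).trans (hf j)) ih
    omega

theorem exists_forall_le_addVal_sub [FiniteDimensional ℚ_[p] K] {f : ℕ → K} {c : ℤ}
    (hf : ∀ m : ℕ, ((c + m : ℤ) : WithTop ℤ) ≤ v.addVal (f (m + 1) - f m)) :
    ∃ u, ∀ m : ℕ, ((c + m : ℤ) : WithTop ℤ) ≤ v.addVal (u - f m) := by
  obtain ⟨r, hr0, hr1, hnorm⟩ := v.exists_absVal_algebraMap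
  let _ : NormedField K := (v.absVal r hr0 hr1.le).toNormedField
  let _ : NormedSpace ℚ_[p] K :=
    { norm_smul_le := fun a x => by
        rw [Algebra.smul_def, norm_mul]
        exact (congrArg (· * ‖x‖) (hnorm a)).le }
  have _ : CompleteSpace K := FiniteDimensional.complete ℚ_[p] K
  have hball (x : K) (j : ℤ) : ‖x‖ ≤ r ^ j ↔ (j : WithTop ℤ) ≤ v.addVal x :=
    v.absVal_le_zpow_iff hr0 hr1
  have hcauchy : CauchySeq f := cauchySeq_of_le_geometric r (r ^ c) hr1 fun m => by
    rw [dist_comm, dist_eq_norm, ← zpow_natCast, ← zpow_add₀ hr0.ne', hball]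
    exact hf m
  obtain ⟨u, hu⟩ := cauchySeq_tendsto_of_complete hcauchy
  refine ⟨u, fun m => ?_⟩
  rw [← hball, ← dist_eq_norm]
  refine Metric.isClosed_closedBall.mem_of_tendsto hu
    (Filter.eventually_atTop.2 ⟨m, fun j hj => ?_⟩)
  rw [Metric.mem_closedBall, dist_eq_norm, hball]
  exact v.le_addVal_sub_of_le_addVal_succ_sub hf hj

theorem le_addVal_div {x y : K} (hy : y ≠ 0) {j : ℤ} (hx : (j : WithTop ℤ) ≤ v.addVal x) :
    ((j - v.ord y : ℤ) : WithTop ℤ) ≤ v.addVal (x / y) := by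
  rcases eq_or_ne x 0 with rfl | hx0
  · simp
  rw [v.addVal.map_div, v.addVal_of_ne_zero hx0, v.addVal_of_ne_zero hy,
    ← WithTop.LinearOrderedAddCommGroup.coe_sub, WithTop.coe_le_coe]
  rw [v.addVal_of_ne_zero hx0, WithTop.coe_le_coe] at hx
  omega

theorem addVal_sub_le_addVal_pow_sub {x y : K} (hx : 0 ≤ v.addVal x) (hy : 0 ≤ v.addVal y)
    (n : ℕ) : v.addVal (x - y) ≤ v.addVal (x ^ n - y ^ n) := by
  rw [← geom_sum₂_mul, v.addVal.map_mul]
  refine le_add_of_nonneg_left (v.addVal.map_le_sum fun i _ => ?_)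
  rw [v.addVal.map_mul, v.addVal.map_pow, v.addVal.map_pow]
  exact add_nonneg (nsmul_nonneg hx i) (nsmul_nonneg hy _)

/-- Newton's step `u ↦ u - (u ^ n - w) / (n u ^ (n - 1))` for `X ^ n - w`. -/
def newtonStep (n : ℕ) (w u : K) : K := u * (1 + (w / u ^ n - 1) / n)

theorem le_addVal_newtonStep_sub {n : ℕ} (hn : (n : K) ≠ 0) {w u : K} (hu : v.addVal u = 0)
    {j : ℤ} (hj : (j : WithTop ℤ) ≤ v.addVal (w / u ^ n - 1)) :
    ((j - v.ord (n : K) : ℤ) : WithTop ℤ) ≤ v.addVal (newtonStep n w u - u) := by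
  rw [newtonStep, mul_add, mul_one, add_sub_cancel_left, v.addVal.map_mul, hu, zero_add]
  exact v.le_addVal_div hn hj

theorem le_addVal_div_pow_newtonStep_sub_one {n : ℕ} (hn : (n : K) ≠ 0) {w u : K}
    (hu : v.addVal u = 0) {j : ℤ} (hjn : v.ord (n : K) < j)
    (hj : (j : WithTop ℤ) ≤ v.addVal (w / u ^ n - 1)) :
    ((2 * (j - v.ord (n : K)) : ℤ) : WithTop ℤ) ≤
      v.addVal (w / newtonStep n w u ^ n - 1) := by
  set s := (w / u ^ n - 1) / n with hs_def
  have hs : ((j - v.ord (n : K) : ℤ) : WithTop ℤ) ≤ v.addVal s := v.le_addVal_div hn hj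
  have hs0 : 0 < v.addVal s := lt_of_lt_of_le (by exact_mod_cast sub_pos.2 hjn) hs
  obtain ⟨c, hc, hpow⟩ := v.exists_one_add_pow_eq hs0.le n
  have hs1 : v.addVal ((1 + s) ^ n) = 0 := by
    rw [v.addVal.map_pow, v.addVal.map_add_eq_of_lt_left (v.addVal.map_one ▸ hs0),
      v.addVal.map_one, nsmul_zero]
  have hs1' : (1 + s) ^ n ≠ 0 := by rintro h; simp [h] at hs1
  have hu0 : u ≠ 0 := by rintro rfl; simp at hu
  have hw : w / u ^ n = 1 + n * s := by rw [hs_def]; field_simp; ring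
  have key : w / newtonStep n w u ^ n - 1 = -(s ^ 2 * c) / (1 + s) ^ n := by
    rw [newtonStep, ← hs_def, mul_pow, ← div_div, hw, eq_div_iff hs1', sub_mul,
      div_mul_cancel₀ _ hs1', hpow]
    ring
  rw [key, v.addVal.map_div, hs1, sub_zero, v.addVal.map_neg, v.addVal.map_mul,
    v.addVal.map_pow, two_nsmul, two_mul, WithTop.coe_add]
  exact le_add_of_le_of_nonneg (add_le_add hs hs) hc

theorem newtonStep_iterate_mem_and_le_addVal {n : ℕ} {k : ℤ} (hn : (n : K) ≠ 0)
    (hk : v.ord (n : K) < k) {w : K} (hw : w ∈ v.principalUnits (k + v.ord (n : K))) (m : ℕ) :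
    (newtonStep n w)^[m] 1 ∈ v.principalUnits k ∧
      ((k + v.ord (n : K) + m : ℤ) : WithTop ℤ) ≤
        v.addVal (w / ((newtonStep n w)^[m] 1) ^ n - 1) := by
  induction m with
  | zero => simpa [principalUnits] using hw
  | succ m ih =>
    obtain ⟨hu, hj⟩ := ih
    have hn0 := v.ord_natCast_nonneg hn
    have hu0 := v.addVal_eq_zero_of_mem_principalUnits (hn0.trans_lt hk) hu
    have hstep := v.le_addVal_newtonStep_sub hn hu0 hj
    have hnext := v.le_addVal_div_pow_newtonStep_sub_one hn hu0 (by omega) hj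
    rw [Function.iterate_succ_apply']
    constructor
    · rw [principalUnits, Set.mem_ofPred_eq, ← sub_add_sub_cancel _ ((newtonStep n w)^[m] 1)]
      exact v.addVal.map_le_add ((WithTop.coe_le_coe.2 (by omega)).trans hstep) hu
    · exact (WithTop.coe_le_coe.2 (by push_cast; omega)).trans hnext

theorem pow_surjOn_principalUnits [FiniteDimensional ℚ_[p] K] {n : ℕ} {k : ℤ}
    (hn : (n : K) ≠ 0) (hk : v.ord (n : K) < k) :
    Set.SurjOn (· ^ n) (v.principalUnits k) (v.principalUnits (k + v.ord (n : K))) := by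
  intro w hw
  set f : ℕ → K := fun m => (newtonStep n w)^[m] 1
  have hspec := v.newtonStep_iterate_mem_and_le_addVal hn hk hw
  have hk0 : 0 < k := (v.ord_natCast_nonneg hn).trans_lt hk
  have hf : ∀ m, v.addVal (f m) = 0 :=
    fun m => v.addVal_eq_zero_of_mem_principalUnits hk0 (hspec m).1
  obtain ⟨u, hu⟩ := v.exists_forall_le_addVal_sub (f := f) (c := k) fun m => by
    have := v.le_addVal_newtonStep_sub hn (hf m) (hspec m).2
    rw [add_right_comm, add_sub_cancel_right] at this
    simpa only [f, Function.iterate_succ_apply'] using this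
  have hu1 : u ∈ v.principalUnits k := by simpa [f, principalUnits] using hu 0
  refine ⟨u, hu1, ?_⟩
  rw [← sub_eq_zero, ← v.addVal.top_iff]
  refine eq_top_of_forall_add_natCast_le (c := k) fun m => ?_
  have hfm0 : f m ≠ 0 := by rintro h; simpa [h] using hf m
  rw [← sub_add_sub_cancel _ (f m ^ n)]
  refine v.addVal.map_le_add ((hu m).trans (v.addVal_sub_le_addVal_pow_sub ?_ (hf m).ge n)) ?_
  · exact (v.addVal_eq_zero_of_mem_principalUnits hk0 hu1).ge
  rw [show f m ^ n - w = -(f m ^ n * (w / f m ^ n - 1)) by field_simp; ring, v.addVal.map_neg,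
    v.addVal.map_mul, v.addVal.map_pow, hf m, nsmul_zero, zero_add]
  exact (WithTop.coe_le_coe.2 (by linarith [v.ord_natCast_nonneg hn])).trans (hspec m).2

theorem pi_zpow_mul_mem_lvl {k : ℤ} (hk : 0 < k) {a : K} (ha : a ∈ v.principalUnits k)
    (m : ℤ) :
    v.pi ^ m * a ∈ v.lvl Set.univ k := by
  have ha1 := v.addVal_eq_zero_of_mem_principalUnits hk ha
  have ha0 : a ≠ 0 := by rintro rfl; simp at ha1
  refine v.mem_lvl_iff.2 ⟨trivial, mul_ne_zero (zpow_ne_zero _ v.pi_ne_zero) ha0, ?_⟩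
  rwa [v.unitPart_pi_zpow_mul ha1]

end PadicLike

/-- For `n > 1` and `k > ord n`, with `k' = k + ord n`, `x ↦ x^n` is a bijection
from `K^{(k)}` onto `P_n^{(k')}`. -/
theorem pow_bijOn {p : ℕ} [Fact p.Prime] {K : Type*} [Field K] [Algebra ℚ_[p] K]
    [FiniteDimensional ℚ_[p] K] (v : PadicLike p K)
    (n : ℕ) (hn : 1 < n) (k : ℤ) (hk : v.ord (n : K) < k) :
    Set.BijOn (fun x : K => x ^ n) (v.lvl Set.univ k)
      (v.lvl (PadicLike.Pset n) (k + v.ord (n : K))) := by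
  have : CharZero K := charZero_of_injective_algebraMap (algebraMap ℚ_[p] K).injective
  have hn0 : n ≠ 0 := by omega
  have hnK : (n : K) ≠ 0 := Nat.cast_ne_zero.2 hn0
  refine ⟨fun x hx => ?_, fun x hx y hy (hxy : x ^ n = y ^ n) => ?_, fun z hz => ?_⟩
  · obtain ⟨-, hx0, hxu⟩ := v.mem_lvl_iff.1 hx
    refine v.mem_lvl_iff.2 ⟨⟨pow_ne_zero n hx0, x, rfl⟩, pow_ne_zero n hx0, ?_⟩
    rw [v.unitPart_pow hx0]
    exact v.pow_mapsTo_principalUnits hnK hk hxu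
  · obtain ⟨-, hx0, hxu⟩ := v.mem_lvl_iff.1 hx
    obtain ⟨-, hy0, hyu⟩ := v.mem_lvl_iff.1 hy
    have hunit : v.unitPart x = v.unitPart y := v.pow_injOn_principalUnits hnK hk hxu hyu <| by
      simp only [← v.unitPart_pow hx0, ← v.unitPart_pow hy0, hxy]
    rw [← v.pi_zpow_ord_mul_unitPart x, ← v.pi_zpow_ord_mul_unitPart y, hunit,
      v.ord_eq_of_pow_eq hn0 hx0 hy0 hxy]
  · obtain ⟨⟨-, y, rfl⟩, hz0, hzu⟩ := v.mem_lvl_iff.1 hz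
    have hy0 : y ≠ 0 := by rintro rfl; exact hz0 (zero_pow hn0)
    rw [v.unitPart_pow hy0] at hzu
    obtain ⟨a, ha, han : a ^ n = _⟩ := v.pow_surjOn_principalUnits hnK hk hzu
    have hk0 : 0 < k := (v.ord_natCast_nonneg hnK).trans_lt hk
    refine ⟨v.pi ^ v.ord y * a, v.pi_zpow_mul_mem_lvl hk0 ha _, ?_⟩
    change (v.pi ^ v.ord y * a) ^ n = y ^ n
    rw [mul_pow, han, ← mul_pow, v.pi_zpow_ord_mul_unitPart]
end

section
/- Let K be a finite extension of ℚ_p with uniformizer π, k ≥ 1, m ≥ 2, β ∈ K with β ∈ K^{(k)} of valuation 0, and ν_1,…,ν_{m−2} ∈ ℤ. Define D = {x ∈ ∏_{i=1}^{m−1} R^{(k)} | ord(β) + Σ_{i=1}^{m−2} ν_i ord(x_i) < ord(x_{m−1})} (with all x_i nonzero) and E₂ = {x ∈ ∏_{i=1}^{m} R^{(k)} | ord(β) + Σ_{i=1}^{m−2} ν_i ord(x_i) < ord(x_m) ≤ ord(β) + ord(x_{m−1}) + Σ_{i=1}^{m−2} ν_i ord(x_i)}. Then the map D × R^{(k)}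 → E₂ given by x ↦ (x_1,…,x_{m−2}, x_{m−1} x_m / (β ∏_{i=1}^{m−2} x_i^{ν_i}), x_{m−1}) is a well-defined bijection. -/
open scoped BigOperators ENNReal NNReal

/-!
The elements of `K^{(k)}` form a multiplicative group: for `ord a = 0` one has
`a b - 1 = a (b - 1) + (a - 1)` and `a⁻¹ - 1 = -a⁻¹ (a - 1)`, so being congruent to `1` to order
`k` is preserved by products and inverses. Since `ord` is additive, the inverse map
`x ↦ ((x_1, …, x_{m-2}, x_m), x_{m-1} β ∏ x_i^{ν_i} / x_m)` also preserves levels, and both maps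
respect the valuation conditions: the middle coordinate of the image has valuation
`ord x_{m-1} + ord x_m - Σ ν_i ord x_i`, which is nonnegative exactly when the upper bound in
`E₂` holds.
-/

namespace PadicLike

variable {p : ℕ} [Fact p.Prime] {K : Type*} [Field K] [Algebra ℚ_[p] K] (v : PadicLike p K)

section Ord

theorem ord_inv {x : K} (hx : x ≠ 0) : v.ord x⁻¹ = -v.ord x := by
  have := v.ord_mul x x⁻¹ hx (inv_ne_zero hx)
  rw [mul_inv_cancel₀ hx, v.ord_one] at this
  omega

theorem ord_div {x y : K} (hx : x ≠ 0) (hy : y ≠ 0) : v.ord (x / y) = v.ord x - v.ord y := by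
  rw [div_eq_mul_inv, v.ord_mul _ _ hx (inv_ne_zero hy), v.ord_inv hy, sub_eq_add_neg]

theorem ord_neg {x : K} (hx : x ≠ 0) : v.ord (-x) = v.ord x := by
  have hm1 : v.ord (-1 : K) = 0 := by
    have := v.ord_mul (-1) (-1) (by norm_num) (by norm_num)
    rw [neg_mul_neg, one_mul, v.ord_one] at this
    omega
  rw [← neg_one_mul, v.ord_mul _ _ (by norm_num) hx, hm1, zero_add]

theorem ord_zpow {x : K} (hx : x ≠ 0) (n : ℤ) : v.ord (x ^ n) = n * v.ord x := by
  induction n using Int.induction_on with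
  | zero => simpa using v.ord_one
  | succ n ih => rw [zpow_add_one₀ hx, v.ord_mul _ _ (zpow_ne_zero _ hx) hx, ih]; ring
  | pred n ih =>
    rw [zpow_sub_one₀ hx, v.ord_mul _ _ (zpow_ne_zero _ hx) (inv_ne_zero hx), v.ord_inv hx, ih]
    ring

theorem ord_prod {ι : Type*} (s : Finset ι) {f : ι → K} (hf : ∀ i ∈ s, f i ≠ 0) :
    v.ord (∏ i ∈ s, f i) = ∑ i ∈ s, v.ord (f i) := by
  classical
  induction s using Finset.induction_on with
  | empty => simpa using v.ord_one
  | insert a s ha ih =>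
    rw [Finset.prod_insert ha, Finset.sum_insert ha,
      v.ord_mul _ _ (hf a (s.mem_insert_self a))
        (Finset.prod_ne_zero_iff.mpr fun i hi => hf i (Finset.mem_insert_of_mem hi)),
      ih fun i hi => hf i (Finset.mem_insert_of_mem hi)]

end Ord

section UnitPart

theorem unitPart_ne_zero {x : K} (hx : x ≠ 0) : v.unitPart x ≠ 0 :=
  mul_ne_zero (zpow_ne_zero _ v.pi_ne_zero) hx

theorem ord_unitPart {x : K} (hx : x ≠ 0) : v.ord (v.unitPart x) = 0 := by
  rw [unitPart, v.ord_mul _ _ (zpow_ne_zero _ v.pi_ne_zero) hx, v.ord_zpow v.pi_ne_zero,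
    v.ord_pi]
  ring

theorem unitPart_mul {x y : K} (hx : x ≠ 0) (hy : y ≠ 0) :
    v.unitPart (x * y) = v.unitPart x * v.unitPart y := by
  simp only [unitPart]
  rw [v.ord_mul _ _ hx hy, neg_add, zpow_add₀ v.pi_ne_zero]
  ring

theorem unitPart_inv {x : K} (hx : x ≠ 0) : v.unitPart x⁻¹ = (v.unitPart x)⁻¹ := by
  simp only [unitPart]
  rw [v.ord_inv hx, neg_neg, mul_inv, ← zpow_neg, neg_neg, mul_comm]

end UnitPart

section NearOne

/-- `a ≡ 1` to order `k`; the disjunct `a = 1` stands for `ord 0 = ∞`. -/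
def IsNearOne (k : ℤ) (a : K) : Prop := a = 1 ∨ k ≤ v.ord (a - 1)

variable {v} {k : ℤ} {a b : K}

theorem IsNearOne.mul (ha : a ≠ 0) (ha0 : v.ord a = 0) (hA : v.IsNearOne k a)
    (hB : v.IsNearOne k b) : v.IsNearOne k (a * b) := by
  rcases hB with rfl | hB
  · rwa [mul_one]
  rcases hA with rfl | hA
  · rw [one_mul]; exact Or.inr hB
  by_cases hab : a * b = 1
  · exact Or.inl hab
  by_cases hb1 : b - 1 = 0
  · rw [sub_eq_zero.mp hb1, mul_one]; exact Or.inr hA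
  by_cases ha1 : a - 1 = 0
  · rw [sub_eq_zero.mp ha1, one_mul]; exact Or.inr hB
  have hsplit : a * b - 1 = a * (b - 1) + (a - 1) := by ring
  have hmin := v.ord_min_le_add (a * (b - 1)) (a - 1) (mul_ne_zero ha hb1) ha1
    (hsplit ▸ sub_ne_zero.mpr hab)
  rw [v.ord_mul _ _ ha hb1, ha0, zero_add] at hmin
  rw [IsNearOne, hsplit]
  omega

theorem IsNearOne.inv (ha : a ≠ 0) (ha0 : v.ord a = 0) (hA : v.IsNearOne k a) :
    v.IsNearOne k a⁻¹ := by
  rcases hA with rfl | hA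
  · exact Or.inl inv_one
  by_cases ha1 : a - 1 = 0
  · exact Or.inl (by rw [sub_eq_zero.mp ha1, inv_one])
  have hsplit : a⁻¹ - 1 = -(a⁻¹ * (a - 1)) := by field_simp; ring
  right
  rw [hsplit, v.ord_neg (mul_ne_zero (inv_ne_zero ha) ha1),
    v.ord_mul _ _ (inv_ne_zero ha) ha1, v.ord_inv ha, ha0]
  omega

end NearOne

section Level

variable {k : ℤ}

theorem mem_lvl_univ_iff {x : K} :
    x ∈ v.lvl Set.univ k ↔ x ≠ 0 ∧ v.IsNearOne k (v.unitPart x) := by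
  simp [lvl, unitPart, IsNearOne]

theorem mem_lvl_R_iff {x : K} : x ∈ v.lvl v.R k ↔ x ∈ v.lvl Set.univ k ∧ 0 ≤ v.ord x := by
  simp only [lvl, R, Set.mem_ofPred_eq, Set.mem_univ, true_and]
  constructor
  · rintro ⟨hR, hx, h⟩
    exact ⟨⟨hx, h⟩, hR.resolve_left hx⟩
  · rintro ⟨⟨hx, h⟩, hR⟩
    exact ⟨Or.inr hR, hx, h⟩

/-- `K^{(k)}`, which is `v.lvl Set.univ k`. -/
def lvlSubmonoid (k : ℤ) : Submonoid K where
  carrier := v.lvl Set.univ k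
  one_mem' := (v.mem_lvl_univ_iff).2 ⟨one_ne_zero, Or.inl (by simp [unitPart, v.ord_one])⟩
  mul_mem' {x y} hx hy := by
    rw [mem_lvl_univ_iff] at *
    refine ⟨mul_ne_zero hx.1 hy.1, ?_⟩
    rw [v.unitPart_mul hx.1 hy.1]
    exact hx.2.mul (v.unitPart_ne_zero hx.1) (v.ord_unitPart hx.1) hy.2

theorem mem_lvlSubmonoid {x : K} : x ∈ v.lvlSubmonoid k ↔ x ∈ v.lvl Set.univ k := Iff.rfl

theorem ne_zero_of_mem_lvlSubmonoid {x : K} (hx : x ∈ v.lvlSubmonoid k) : x ≠ 0 :=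
  ((v.mem_lvl_univ_iff).1 hx).1

theorem inv_mem_lvlSubmonoid {x : K} (hx : x ∈ v.lvlSubmonoid k) : x⁻¹ ∈ v.lvlSubmonoid k := by
  rw [mem_lvlSubmonoid, mem_lvl_univ_iff] at *
  refine ⟨inv_ne_zero hx.1, ?_⟩
  rw [v.unitPart_inv hx.1]
  exact hx.2.inv (v.unitPart_ne_zero hx.1) (v.ord_unitPart hx.1)

theorem zpow_mem_lvlSubmonoid {x : K} (hx : x ∈ v.lvlSubmonoid k) (n : ℤ) :
    x ^ n ∈ v.lvlSubmonoid k := by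
  cases n with
  | ofNat n => simpa using pow_mem hx n
  | negSucc n => simpa using v.inv_mem_lvlSubmonoid (pow_mem hx (n + 1))

theorem div_mem_lvlSubmonoid {x y : K} (hx : x ∈ v.lvlSubmonoid k) (hy : y ∈ v.lvlSubmonoid k) :
    x / y ∈ v.lvlSubmonoid k :=
  div_eq_mul_inv x y ▸ mul_mem hx (v.inv_mem_lvlSubmonoid hy)

end Level

section Weight

variable {ι : Type*} [Fintype ι] {β : K} (ν : ι → ℤ) {z : ι → K}

theorem mul_prod_zpow_ne_zero (hβ : β ≠ 0) (hz : ∀ i, z i ≠ 0) : β * ∏ i, z i ^ ν i ≠ 0 :=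
  mul_ne_zero hβ (Finset.prod_ne_zero_iff.mpr fun i _ => zpow_ne_zero _ (hz i))

theorem mul_prod_zpow_mem_lvlSubmonoid {k : ℤ} (hβ : β ∈ v.lvlSubmonoid k)
    (hz : ∀ i, z i ∈ v.lvlSubmonoid k) : β * ∏ i, z i ^ ν i ∈ v.lvlSubmonoid k :=
  mul_mem hβ (prod_mem fun i _ => v.zpow_mem_lvlSubmonoid (hz i) (ν i))

theorem ord_mul_prod_zpow (hβ : β ≠ 0) (hβ0 : v.ord β = 0) (hz : ∀ i, z i ≠ 0) :
    v.ord (β * ∏ i, z i ^ ν i) = ∑ i, ν i * v.ord (z i) := by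
  rw [v.ord_mul _ _ hβ (Finset.prod_ne_zero_iff.mpr fun i _ => zpow_ne_zero _ (hz i)), hβ0,
    zero_add, v.ord_prod _ fun i _ => zpow_ne_zero _ (hz i)]
  exact Finset.sum_congr rfl fun i _ => v.ord_zpow (hz i) (ν i)

end Weight

section Shear

variable {t : ℕ} (k : ℤ) (ν : Fin t → ℤ) (β : K)

def D : Set (Fin (t + 1) → K) :=
  {y | (∀ i, y i ∈ v.lvl v.R k) ∧
    v.ord β + ∑ i : Fin t, ν i * v.ord (y i.castSucc) < v.ord (y (Fin.last t))}

def E₂ : Set (Fin (t + 2) → K) :=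
  {x | (∀ i, x i ∈ v.lvl v.R k) ∧
    v.ord β + ∑ i : Fin t, ν i * v.ord (x i.castSucc.castSucc) < v.ord (x (Fin.last (t + 1))) ∧
    v.ord (x (Fin.last (t + 1))) ≤
      v.ord β + v.ord (x (Fin.last t).castSucc) + ∑ i : Fin t, ν i * v.ord (x i.castSucc.castSucc)}

def toE₂ (yu : (Fin (t + 1) → K) × K) : Fin (t + 2) → K :=
  Fin.snoc
    (Fin.snoc (fun i : Fin t => yu.1 i.castSucc)
      (yu.1 (Fin.last t) * yu.2 / (β * ∏ i : Fin t, yu.1 i.castSucc ^ ν i)))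
    (yu.1 (Fin.last t))

def ofE₂ (x : Fin (t + 2) → K) : (Fin (t + 1) → K) × K :=
  (Fin.snoc (fun i : Fin t => x i.castSucc.castSucc) (x (Fin.last (t + 1))),
    x (Fin.last t).castSucc * (β * ∏ i : Fin t, x i.castSucc.castSucc ^ ν i) /
      x (Fin.last (t + 1)))

variable {v k ν β}

theorem mapsTo_toE₂ (hβ : β ∈ v.lvlSubmonoid k) (hβ0 : v.ord β = 0) :
    Set.MapsTo (toE₂ ν β) (v.D k ν β ×ˢ v.lvl v.R k) (v.E₂ k ν β) := by
  rintro ⟨y, u⟩ ⟨⟨hy, hlt⟩, hu⟩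
  dsimp only at hy hlt hu
  have hyU i := ((v.mem_lvl_R_iff).1 (hy i)).1
  have hy0 i := v.ne_zero_of_mem_lvlSubmonoid (hyU i)
  obtain ⟨huU, hu_ord⟩ := (v.mem_lvl_R_iff).1 hu
  have hu0 := v.ne_zero_of_mem_lvlSubmonoid huU
  have hw0 := mul_prod_zpow_ne_zero ν (v.ne_zero_of_mem_lvlSubmonoid hβ) fun i => hy0 i.castSucc
  have hmid_mem : y (Fin.last t) * u / (β * ∏ i : Fin t, y i.castSucc ^ ν i) ∈ v.lvlSubmonoid k :=
    v.div_mem_lvlSubmonoid (mul_mem (hyU _) huU)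
      (v.mul_prod_zpow_mem_lvlSubmonoid ν hβ fun i => hyU i.castSucc)
  have hmid_ord : v.ord (y (Fin.last t) * u / (β * ∏ i : Fin t, y i.castSucc ^ ν i)) =
      v.ord (y (Fin.last t)) + v.ord u - ∑ i : Fin t, ν i * v.ord (y i.castSucc) := by
    rw [v.ord_div (mul_ne_zero (hy0 _) hu0) hw0, v.ord_mul _ _ (hy0 _) hu0,
      v.ord_mul_prod_zpow ν (v.ne_zero_of_mem_lvlSubmonoid hβ) hβ0 fun i => hy0 i.castSucc]
  simp only [E₂, toE₂, Set.mem_ofPred_eq, Fin.forall_fin_succ', Fin.snoc_castSucc, Fin.snoc_last]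
  exact ⟨⟨⟨fun i => hy i.castSucc, (v.mem_lvl_R_iff).2 ⟨hmid_mem, by omega⟩⟩, hy _⟩, hlt,
    by omega⟩

theorem mapsTo_ofE₂ (hβ : β ∈ v.lvlSubmonoid k) (hβ0 : v.ord β = 0) :
    Set.MapsTo (ofE₂ ν β) (v.E₂ k ν β) (v.D k ν β ×ˢ v.lvl v.R k) := by
  rintro x ⟨hx, hlt, hle⟩
  have hxU i := ((v.mem_lvl_R_iff).1 (hx i)).1
  have hx0 i := v.ne_zero_of_mem_lvlSubmonoid (hxU i)
  have hw0 := mul_prod_zpow_ne_zero ν (v.ne_zero_of_mem_lvlSubmonoid hβ)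
    fun i => hx0 i.castSucc.castSucc
  have hu_mem : x (Fin.last t).castSucc * (β * ∏ i : Fin t, x i.castSucc.castSucc ^ ν i) /
      x (Fin.last (t + 1)) ∈ v.lvlSubmonoid k :=
    v.div_mem_lvlSubmonoid
      (mul_mem (hxU _) (v.mul_prod_zpow_mem_lvlSubmonoid ν hβ fun i => hxU i.castSucc.castSucc))
      (hxU _)
  have hu_ord : v.ord (x (Fin.last t).castSucc * (β * ∏ i : Fin t, x i.castSucc.castSucc ^ ν i) /
      x (Fin.last (t + 1))) = v.ord (x (Fin.last t).castSucc) +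
        ∑ i : Fin t, ν i * v.ord (x i.castSucc.castSucc) - v.ord (x (Fin.last (t + 1))) := by
    rw [v.ord_div (mul_ne_zero (hx0 _) hw0) (hx0 _), v.ord_mul _ _ (hx0 _) hw0,
      v.ord_mul_prod_zpow ν (v.ne_zero_of_mem_lvlSubmonoid hβ) hβ0
        fun i => hx0 i.castSucc.castSucc]
  simp only [D, ofE₂, Set.mem_prod, Set.mem_ofPred_eq, Fin.forall_fin_succ', Fin.snoc_castSucc,
    Fin.snoc_last]
  exact ⟨⟨⟨fun i => hx _, hx _⟩, hlt⟩, (v.mem_lvl_R_iff).2 ⟨hu_mem, by omega⟩⟩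

theorem invOn_ofE₂_toE₂ (hβ : β ≠ 0) :
    Set.InvOn (ofE₂ ν β) (toE₂ ν β) (v.D k ν β ×ˢ v.lvl v.R k) (v.E₂ k ν β) := by
  constructor
  · rintro ⟨y, u⟩ ⟨⟨hy, -⟩, -⟩
    dsimp only at hy
    have hy0 i := v.ne_zero_of_mem_lvlSubmonoid ((v.mem_lvl_R_iff).1 (hy i)).1
    have hw0 := mul_prod_zpow_ne_zero ν hβ fun i => hy0 i.castSucc
    simp only [ofE₂, toE₂, Fin.snoc_castSucc, Fin.snoc_last]
    refine Prod.ext ?_ ?_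
    · funext i
      cases i using Fin.lastCases <;> simp
    · rw [div_mul_cancel₀ _ hw0, mul_div_cancel_left₀ _ (hy0 _)]
  · rintro x ⟨hx, -⟩
    have hx0 i := v.ne_zero_of_mem_lvlSubmonoid ((v.mem_lvl_R_iff).1 (hx i)).1
    have hw0 := mul_prod_zpow_ne_zero ν hβ fun i => hx0 i.castSucc.castSucc
    funext i
    cases i using Fin.lastCases with
    | last => simp [toE₂, ofE₂]
    | cast j =>
      cases j using Fin.lastCases with
      | last =>
        simp only [toE₂, ofE₂, Fin.snoc_castSucc, Fin.snoc_last]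
        rw [mul_div_cancel₀ _ (hx0 _), mul_div_cancel_right₀ _ hw0]
      | cast i => simp [toE₂, ofE₂]

end Shear

end PadicLike

/-- Here `m = t + 2`, and the coordinates `x_1, …, x_{m-2}` are indexed by `Fin t`. -/
theorem bijOn_D_prod_lvl_general {p : ℕ} [Fact p.Prime] {K : Type*} [Field K]
    [Algebra ℚ_[p] K] (v : PadicLike p K) (k : ℤ)
    (t : ℕ) (ν : Fin t → ℤ) (β : K) (hβ : β ≠ 0) (hβ0 : v.ord β = 0)
    (hβk : β - 1 = 0 ∨ k ≤ v.ord (β - 1)) :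
    Set.BijOn
      (fun yu : (Fin (t + 1) → K) × K =>
        (Fin.snoc
          (Fin.snoc (fun i : Fin t => yu.1 i.castSucc)
            (yu.1 (Fin.last t) * yu.2 / (β * ∏ i : Fin t, yu.1 i.castSucc ^ ν i)))
          (yu.1 (Fin.last t)) : Fin (t + 2) → K))
      (({y : Fin (t + 1) → K | (∀ i, y i ∈ v.lvl v.R k) ∧
          v.ord β + ∑ i : Fin t, ν i * v.ord (y i.castSucc) < v.ord (y (Fin.last t))}) ×ˢ
        v.lvl v.R k)
      {x : Fin (t + 2) → K | (∀ i, x i ∈ v.lvl v.R k) ∧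
        v.ord β + ∑ i : Fin t, ν i * v.ord (x i.castSucc.castSucc) <
          v.ord (x (Fin.last (t + 1))) ∧
        v.ord (x (Fin.last (t + 1))) ≤
          v.ord β + v.ord (x ((Fin.last t).castSucc)) +
            ∑ i : Fin t, ν i * v.ord (x i.castSucc.castSucc)} := by
  have hβ_mem : β ∈ v.lvlSubmonoid k := by
    refine (v.mem_lvl_univ_iff).2 ⟨hβ, ?_⟩
    simpa [PadicLike.IsNearOne, PadicLike.unitPart, hβ0, sub_eq_zero] using hβk
  exact (PadicLike.invOn_ofE₂_toE₂ hβ).bijOn (PadicLike.mapsTo_toE₂ hβ_mem hβ0)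
    (PadicLike.mapsTo_ofE₂ hβ_mem hβ0)

/-- The map `(x_1,…,x_{m-1},x_m) ↦ (x_1,…,x_{m-2}, x_{m-1} x_m/(β ∏ x_i^{ν_i}), x_{m-1})`
is a well-defined bijection from `D × R^{(k)}` onto `E₂`. Here `m = t + 2`,
coordinates `x_1,…,x_{m-2}` are indexed by `Fin t`. -/
theorem bijOn_D_prod_lvl {p : ℕ} [Fact p.Prime] {K : Type*} [Field K]
    [Algebra ℚ_[p] K] (v : PadicLike p K) (k : ℤ) (hk : 1 ≤ k)
    (t : ℕ) (ν : Fin t → ℤ) (β : K) (hβ : β ≠ 0) (hβ0 : v.ord β = 0)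
    (hβk : β - 1 = 0 ∨ k ≤ v.ord (β - 1)) :
    Set.BijOn
      (fun yu : (Fin (t + 1) → K) × K =>
        (Fin.snoc
          (Fin.snoc (fun i : Fin t => yu.1 i.castSucc)
            (yu.1 (Fin.last t) * yu.2 / (β * ∏ i : Fin t, yu.1 i.castSucc ^ ν i)))
          (yu.1 (Fin.last t)) : Fin (t + 2) → K))
      (({y : Fin (t + 1) → K | (∀ i, y i ∈ v.lvl v.R k) ∧
          v.ord β + ∑ i : Fin t, ν i * v.ord (y i.castSucc) < v.ord (y (Fin.last t))}) ×ˢ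
        v.lvl v.R k)
      {x : Fin (t + 2) → K | (∀ i, x i ∈ v.lvl v.R k) ∧
        v.ord β + ∑ i : Fin t, ν i * v.ord (x i.castSucc.castSucc) <
          v.ord (x (Fin.last (t + 1))) ∧
        v.ord (x (Fin.last (t + 1))) ≤
          v.ord β + v.ord (x ((Fin.last t).castSucc)) +
            ∑ i : Fin t, ν i * v.ord (x i.castSucc.castSucc)} :=
  bijOn_D_prod_lvl_general v k t ν β hβ hβ0 hβk
end
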